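/- arXiv:math/0205138 — 2 statements merged into one kernel-verified Lean document; each statement's English description precedes it below -/
import Mathlib

section
/- Let p, q be integers with 0 < q < p and gcd(p,q) = 1, and let p/q = [a₁, …, a_m] be the continued fraction expansion produced by the Euclidean algorithm. Define ψ_{p,q} ∈ G by ψ_{p,q} = a^{a₁}·b^{-a₂}·a^{a₃}·⋯·a^{a_m} if m is odd, and ψ_{p,q} = a^{a₁}·b^{-a₂}·⋯·b^{-a_m}·b·a·b if m is even. Then the matrix Ω(ψ_{p,q}) has top-left entry equal to q and bottom-left entry equal to p. -/
/-- `SL2Z` is the group of 2×2 integer matrices of determinant 1. -/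
abbrev SL2Z := Matrix.SpecialLinearGroup (Fin 2) ℤ

/-- The matrix A = [[1,0],[1,1]]. -/
def matA : SL2Z := ⟨!![1, 0; 1, 1], by norm_num [Matrix.det_fin_two_of]⟩

/-- The matrix B = [[1,-1],[0,1]]. -/
def matB : SL2Z := ⟨!![1, -1; 0, 1], by norm_num [Matrix.det_fin_two_of]⟩

/-- The four relators of the presentation of `PMCG₂(T)`:
`a·b·a·b⁻¹·a⁻¹·b⁻¹`, `a·c·a·c⁻¹·a⁻¹·c⁻¹`, `b·c·b⁻¹·c⁻¹`, `(a·b·c)⁴`,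
where `a, b, c` are the generators `0, 1, 2`. -/
def pmcgRels : Set (FreeGroup (Fin 3)) :=
  { FreeGroup.of 0 * FreeGroup.of 1 * FreeGroup.of 0 *
      (FreeGroup.of 1)⁻¹ * (FreeGroup.of 0)⁻¹ * (FreeGroup.of 1)⁻¹,
    FreeGroup.of 0 * FreeGroup.of 2 * FreeGroup.of 0 *
      (FreeGroup.of 2)⁻¹ * (FreeGroup.of 0)⁻¹ * (FreeGroup.of 2)⁻¹,
    FreeGroup.of 1 * FreeGroup.of 2 * (FreeGroup.of 1)⁻¹ * (FreeGroup.of 2)⁻¹,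
    (FreeGroup.of 0 * FreeGroup.of 1 * FreeGroup.of 2) ^ 4 }

/-- `G = ⟨a, b, c | a·b·a = b·a·b, a·c·a = c·a·c, b·c = c·b, (a·b·c)⁴ = 1⟩`,
a presentation of `PMCG₂(T)`. -/
abbrev G := PresentedGroup pmcgRels

/-- The generator `a` (the Dehn twist `t_α`). -/
def ga : G := PresentedGroup.of 0
/-- The generator `b` (the Dehn twist `t_β`). -/
def gb : G := PresentedGroup.of 1
/-- The generator `c` (the Dehn twist `t_γ`). -/
def gc : G := PresentedGroup.of 2

/-- The continued fraction `[a₁, …, a_m] = a₁ + 1/(a₂ + 1/(⋯ + 1/a_m))` of a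
list of (positive) integers, as a rational number. -/
def cf : List ℤ → ℚ
  | [] => 0
  | x :: l => x + (cf l)⁻¹

/-- The alternating product `a^{a₁}·b^{-a₂}·a^{a₃}·⋯` in `G` (factor `a^{aᵢ}`
for odd `i`, factor `b^{-aᵢ}` for even `i`, starting with `a` when the flag
is `false`). -/
def altG : Bool → List ℤ → G
  | _, [] => 1
  | false, x :: l => ga ^ x * altG true l
  | true, x :: l => gb ^ (-x) * altG false l

/-- The element `ψ_{p,q} ∈ G` associated with the continued fraction
expansion `p/q = [a₁, …, a_m]`: it equals `a^{a₁}·b^{-a₂}·⋯·a^{a_m}` if `m`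
is odd, and `a^{a₁}·b^{-a₂}·⋯·b^{-a_m}·b·a·b` if `m` is even. -/
def ψpq (L : List ℤ) : G :=
  if Odd L.length then altG false L else altG false L * (gb * ga * gb)

/-! The matrices `Ω (a ^ x)` and `Ω (b ^ (-x))` act on a first column `(q, p)` as
`(q, p) ↦ (q, x q + p)` and `(q, p) ↦ (q + x p, p)`, which is the recursion
`p / q ↦ x + q / p` of continued fractions. By induction along the coefficients, the first
column of `Ω ψ_{p,q}` is a pair `(q₀, p₀)` with `0 ≤ q₀`, `0 < p₀` and `p₀ / q₀ = [a₁, …, a_m]`.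
As a column of a matrix in `SL(2, ℤ)` it is coprime, and `q₀ ≠ 0` since `p / q ≠ 0`, so it is
`(q, p)`. -/

open Matrix.SpecialLinearGroup ModularGroup

lemma matB_eq_T_inv : matB = T⁻¹ := Subtype.ext coe_T_inv.symm

lemma matA_eq_conj : matA = S * T⁻¹ * S⁻¹ := by
  ext i j
  fin_cases i <;> fin_cases j <;> simp [matA, coe_inv, Matrix.adjugate_fin_two]

lemma coe_matB_zpow (n : ℤ) :
    ((matB ^ n : SL2Z) : Matrix (Fin 2) (Fin 2) ℤ) = !![1, -n; 0, 1] := by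
  rw [matB_eq_T_inv, inv_zpow', coe_T_zpow]

lemma coe_matA_zpow (n : ℤ) :
    ((matA ^ n : SL2Z) : Matrix (Fin 2) (Fin 2) ℤ) = !![1, 0; n, 1] := by
  rw [matA_eq_conj, conj_zpow, inv_zpow', coe_mul, coe_mul, coe_T_zpow, coe_inv, coe_S,
    Matrix.adjugate_fin_two]
  simp

lemma matB_mul_matA_mul_matB : matB * matA * matB = S := by
  ext : 1
  rw [coe_mul, coe_mul, coe_S]
  simp [matA, matB]

lemma matA_zpow_mul_apply_zero_zero (n : ℤ) (g : SL2Z) : (matA ^ n * g) 0 0 = g 0 0 := by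
  simp [coe_mul, coe_matA_zpow, Matrix.mul_apply, Fin.sum_univ_two]

lemma matA_zpow_mul_apply_one_zero (n : ℤ) (g : SL2Z) :
    (matA ^ n * g) 1 0 = n * g 0 0 + g 1 0 := by
  simp [coe_mul, coe_matA_zpow, Matrix.mul_apply, Fin.sum_univ_two]

lemma matB_zpow_neg_mul_apply_zero_zero (n : ℤ) (g : SL2Z) :
    (matB ^ (-n) * g) 0 0 = n * g 1 0 + g 0 0 := by
  simp [coe_mul, coe_matB_zpow, Matrix.mul_apply, Fin.sum_univ_two, add_comm]

lemma matB_zpow_neg_mul_apply_one_zero (n : ℤ) (g : SL2Z) : (matB ^ (-n) * g) 1 0 = g 1 0 := by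
  simp [coe_mul, coe_matB_zpow, Matrix.mul_apply, Fin.sum_univ_two]

-- The denominator may vanish: the empty continued fraction is `cf [] = 0 = 1 / 0`.
def IsPosFraction (r : ℚ) (p q : ℤ) : Prop := 0 < p ∧ 0 ≤ q ∧ r = p / q

lemma IsPosFraction.cons {l : List ℤ} {x p q : ℤ} (hx : 0 < x) (h : IsPosFraction (cf l) p q) :
    IsPosFraction (cf (x :: l)) (x * p + q) p := by
  obtain ⟨hp, hq, hcf⟩ := h
  refine ⟨by positivity, hp.le, ?_⟩
  have : (p : ℚ) ≠ 0 := by positivity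
  rw [cf, hcf, inv_div]
  field_simp
  push_cast
  ring

def ψpqB (L : List ℤ) : G :=
  if Odd L.length then altG true L * (gb * ga * gb) else altG true L

lemma ψpq_nil : ψpq [] = gb * ga * gb := by simp [ψpq, altG]

lemma ψpqB_nil : ψpqB [] = 1 := by simp [ψpqB, altG]

lemma ψpq_cons (x : ℤ) (l : List ℤ) : ψpq (x :: l) = ga ^ x * ψpqB l := by
  by_cases h : Odd l.length <;> simp [ψpq, ψpqB, altG, Nat.odd_add_one, h, mul_assoc]

lemma ψpqB_cons (x : ℤ) (l : List ℤ) : ψpqB (x :: l) = gb ^ (-x) * ψpq l := by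
  by_cases h : Odd l.length <;> simp [ψpq, ψpqB, altG, Nat.odd_add_one, h, mul_assoc]

theorem isPosFraction_cf_ψpq {Ω : G →* SL2Z} (ha : Ω ga = matA) (hb : Ω gb = matB)
    (L : List ℤ) (hpos : ∀ x ∈ L, 0 < x) :
    IsPosFraction (cf L) (Ω (ψpq L) 1 0) (Ω (ψpq L) 0 0) ∧
      IsPosFraction (cf L) (Ω (ψpqB L) 0 0) (Ω (ψpqB L) 1 0) := by
  induction L with
  | nil =>
    rw [ψpq_nil, ψpqB_nil, map_mul, map_mul, ha, hb, matB_mul_matA_mul_matB, map_one]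
    simp [IsPosFraction, cf]
  | cons x l ih =>
    obtain ⟨hx, hpos⟩ := List.forall_mem_cons.mp hpos
    obtain ⟨hψ, hψB⟩ := ih hpos
    rw [ψpq_cons, ψpqB_cons, map_mul, map_mul, map_zpow, map_zpow, ha, hb,
      matA_zpow_mul_apply_zero_zero, matA_zpow_mul_apply_one_zero,
      matB_zpow_neg_mul_apply_zero_zero, matB_zpow_neg_mul_apply_one_zero]
    exact ⟨hψB.cons hx, hψ.cons hx⟩

theorem stmt6_general (p q : ℤ) (hq : 0 < q) (hqp : q < p) (hcop : Int.gcd p q = 1)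
    (L : List ℤ) (hpos : ∀ x ∈ L, 0 < x)
    (hcf : (p : ℚ) / q = cf L)
    (Ω : G →* SL2Z) (ha : Ω ga = matA) (hb : Ω gb = matB) :
    (Ω (ψpq L) : Matrix (Fin 2) (Fin 2) ℤ) 0 0 = q ∧
    (Ω (ψpq L) : Matrix (Fin 2) (Fin 2) ℤ) 1 0 = p := by
  obtain ⟨-, hq₀_nonneg, hcf₀⟩ := (isPosFraction_cf_ψpq ha hb L hpos).1
  set M := Ω (ψpq L)
  have hq₀ : 0 < M 0 0 := by
    refine hq₀_nonneg.lt_of_ne' fun h => ?_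
    have hpq : (0 : ℚ) < p / q := div_pos (by exact_mod_cast hq.trans hqp) (by exact_mod_cast hq)
    rw [hcf, hcf₀, h, Int.cast_zero, div_zero] at hpq
    exact hpq.false
  have hcop₀ : Int.gcd (M 1 0) (M 0 0) = 1 :=
    Int.isCoprime_iff_gcd_eq_one.mp (M.isCoprime_col 0).symm
  obtain ⟨hp, hq⟩ := Rat.div_int_inj hq hq₀ hcop hcop₀ (hcf.trans hcf₀)
  exact ⟨hq.symm, hp.symm⟩

theorem stmt6 (p q : ℤ) (hq : 0 < q) (hqp : q < p) (hcop : Int.gcd p q = 1)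
    (L : List ℤ) (hne : L ≠ []) (hpos : ∀ x ∈ L, 0 < x)
    -- the continued fraction expansion produced by the Euclidean algorithm
    -- is precisely the one with positive coefficients whose last
    -- coefficient is at least 2:
    (hlast : 2 ≤ L.getLast hne)
    (hcf : (p : ℚ) / q = cf L)
    (Ω : G →* SL2Z) (ha : Ω ga = matA) (hb : Ω gb = matB) (hc : Ω gc = matB) :
    (Ω (ψpq L) : Matrix (Fin 2) (Fin 2) ℤ) 0 0 = q ∧
    (Ω (ψpq L) : Matrix (Fin 2) (Fin 2) ℤ) 1 0 = p :=
  stmt6_general p q hq hqp hcop L hpos hcf Ω ha hb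
end

section
/- In the group G the following identity holds: c²·a·c·b⁻¹·a⁻¹·c⁻¹·a·b·c⁻¹·a⁻¹·b⁻¹ = τ_l⁻¹·τ_m·τ_l·τ_m⁻¹, where τ_m = b·c⁻¹ and τ_l = τ_m⁻¹·a·τ_m·a⁻¹. (The left-hand side is the Dehn twist t_ε obtained from the lantern relation; the identity uses only the braid relations a·b·a = b·a·b, a·c·a = c·a·c and the commutation b·c = c·b.) -/
/-- `τ_m = b·c⁻¹`. -/
def τm : G := gb * gc⁻¹

/-- `τ_l = τ_m⁻¹·a·τ_m·a⁻¹`. -/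
def τl : G := τm⁻¹ * ga * τm * ga⁻¹

lemma relG {r : FreeGroup (Fin 3)} (hr : r ∈ pmcgRels) :
    PresentedGroup.mk pmcgRels r = 1 :=
  (QuotientGroup.eq_one_iff r).mpr (Subgroup.subset_normalClosure hr)

lemma rel1 : ga * gb * ga = gb * ga * gb := by
  have h0 := relG (show _ ∈ pmcgRels from Or.inl rfl)
  simp only [map_mul, map_inv] at h0
  have h : ga * gb * ga * gb⁻¹ * ga⁻¹ * gb⁻¹ = 1 := h0
  calc ga * gb * ga = (ga * gb * ga * gb⁻¹ * ga⁻¹ * gb⁻¹) * (gb * ga * gb) := by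
        group
    _ = 1 * (gb * ga * gb) := by rw [h]
    _ = gb * ga * gb := one_mul _

lemma rel2 : ga * gc * ga = gc * ga * gc := by
  have h0 := relG (show _ ∈ pmcgRels from Or.inr (Or.inl rfl))
  simp only [map_mul, map_inv] at h0
  have h : ga * gc * ga * gc⁻¹ * ga⁻¹ * gc⁻¹ = 1 := h0
  calc ga * gc * ga = (ga * gc * ga * gc⁻¹ * ga⁻¹ * gc⁻¹) * (gc * ga * gc) := by
        group
    _ = 1 * (gc * ga * gc) := by rw [h]
    _ = gc * ga * gc := one_mul _

lemma rel3 : gb * gc = gc * gb := by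
  have h0 := relG (show _ ∈ pmcgRels from Or.inr (Or.inr (Or.inl rfl)))
  simp only [map_mul, map_inv] at h0
  have h : gb * gc * gb⁻¹ * gc⁻¹ = 1 := h0
  calc gb * gc = (gb * gc * gb⁻¹ * gc⁻¹) * (gc * gb) := by group
    _ = 1 * (gc * gb) := by rw [h]
    _ = gc * gb := one_mul _

-- a⁻¹ * c * a = c * a * c⁻¹
lemma hca : ga⁻¹ * gc * ga = gc * ga * gc⁻¹ := by
  calc ga⁻¹ * gc * ga = ga⁻¹ * (gc * ga * gc) * gc⁻¹ := by group
    _ = ga⁻¹ * (ga * gc * ga) * gc⁻¹ := by rw [rel2]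
    _ = gc * ga * gc⁻¹ := by group

-- c⁻¹ * a * c = a * c * a⁻¹
lemma hac : gc⁻¹ * ga * gc = ga * gc * ga⁻¹ := by
  calc gc⁻¹ * ga * gc = gc⁻¹ * (ga * gc * ga) * ga⁻¹ := by group
    _ = gc⁻¹ * (gc * ga * gc) * ga⁻¹ := by rw [rel2]
    _ = ga * gc * ga⁻¹ := by group

-- b * a * b⁻¹ = a⁻¹ * b * a
lemma hbab : gb * ga * gb⁻¹ = ga⁻¹ * gb * ga := by
  calc gb * ga * gb⁻¹ = ga⁻¹ * (ga * gb * ga) * gb⁻¹ := by group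
    _ = ga⁻¹ * (gb * ga * gb) * gb⁻¹ := by rw [rel1]
    _ = ga⁻¹ * gb * ga := by group

-- conjugation of c² by a⁻¹
lemma hc2 : ga⁻¹ * (gc * gc) * ga = gc * (ga * ga) * gc⁻¹ := by
  calc ga⁻¹ * (gc * gc) * ga = (ga⁻¹ * gc * ga) * (ga⁻¹ * gc * ga) := by group
    _ = (gc * ga * gc⁻¹) * (gc * ga * gc⁻¹) := by rw [hca]
    _ = gc * (ga * ga) * gc⁻¹ := by group

-- conjugation of a² by b
lemma hb2 : gb * (ga * ga) * gb⁻¹ = ga⁻¹ * (gb * gb) * ga := by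
  calc gb * (ga * ga) * gb⁻¹ = (gb * ga * gb⁻¹) * (gb * ga * gb⁻¹) := by group
    _ = (ga⁻¹ * gb * ga) * (ga⁻¹ * gb * ga) := by rw [hbab]
    _ = ga⁻¹ * (gb * gb) * ga := by group

-- key 1 : c² · (a c b⁻¹ a⁻¹) = (a c b⁻¹ a⁻¹) · b²
lemma key1 : gc * gc * (ga * gc * gb⁻¹ * ga⁻¹) =
    ga * gc * gb⁻¹ * ga⁻¹ * (gb * gb) := by
  calc gc * gc * (ga * gc * gb⁻¹ * ga⁻¹)
      = ga * (ga⁻¹ * (gc * gc) * ga) * gc * gb⁻¹ * ga⁻¹ := by group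
    _ = ga * (gc * (ga * ga) * gc⁻¹) * gc * gb⁻¹ * ga⁻¹ := by rw [hc2]
    _ = ga * gc * gb⁻¹ * (gb * (ga * ga) * gb⁻¹) * ga⁻¹ := by group
    _ = ga * gc * gb⁻¹ * (ga⁻¹ * (gb * gb) * ga) * ga⁻¹ := by rw [hb2]
    _ = ga * gc * gb⁻¹ * ga⁻¹ * (gb * gb) := by group

-- key 2 : b² · (c⁻¹ a b c⁻¹ a⁻¹ b⁻¹) = b c⁻¹ a b c⁻¹ a⁻¹ c b⁻¹
lemma key2 : gb * gb * (gc⁻¹ * ga * gb * gc⁻¹ * ga⁻¹ * gb⁻¹) =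
    gb * gc⁻¹ * ga * gb * gc⁻¹ * ga⁻¹ * gc * gb⁻¹ := by
  have hbc : gb * gc⁻¹ = gc⁻¹ * gb := by
    calc gb * gc⁻¹ = gc⁻¹ * (gc * gb) * gc⁻¹ := by group
      _ = gc⁻¹ * (gb * gc) * gc⁻¹ := by rw [rel3]
      _ = gc⁻¹ * gb := by group
  have hcac : ga * gc⁻¹ * ga⁻¹ = gc⁻¹ * ga⁻¹ * gc := by
    calc ga * gc⁻¹ * ga⁻¹ = (ga * gc * ga⁻¹)⁻¹ := by group
      _ = (gc⁻¹ * ga * gc)⁻¹ := by rw [hac]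
      _ = gc⁻¹ * ga⁻¹ * gc := by group
  calc gb * gb * (gc⁻¹ * ga * gb * gc⁻¹ * ga⁻¹ * gb⁻¹)
      = gb * (gb * gc⁻¹) * ga * gb * gc⁻¹ * ga⁻¹ * gb⁻¹ := by group
    _ = gb * (gc⁻¹ * gb) * ga * gb * gc⁻¹ * ga⁻¹ * gb⁻¹ := by rw [hbc]
    _ = gb * gc⁻¹ * (gb * ga * gb) * gc⁻¹ * ga⁻¹ * gb⁻¹ := by group
    _ = gb * gc⁻¹ * (ga * gb * ga) * gc⁻¹ * ga⁻¹ * gb⁻¹ := by rw [← rel1]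
    _ = gb * gc⁻¹ * ga * gb * (ga * gc⁻¹ * ga⁻¹) * gb⁻¹ := by group
    _ = gb * gc⁻¹ * ga * gb * (gc⁻¹ * ga⁻¹ * gc) * gb⁻¹ := by rw [hcac]
    _ = gb * gc⁻¹ * ga * gb * gc⁻¹ * ga⁻¹ * gc * gb⁻¹ := by group

theorem stmt8 :
    gc ^ 2 * ga * gc * gb⁻¹ * ga⁻¹ * gc⁻¹ * ga * gb * gc⁻¹ * ga⁻¹ * gb⁻¹ =
      τl⁻¹ * τm * τl * τm⁻¹ := by
  unfold τl τm
  rw [pow_two]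
  calc gc * gc * ga * gc * gb⁻¹ * ga⁻¹ * gc⁻¹ * ga * gb * gc⁻¹ * ga⁻¹ * gb⁻¹
      = gc * gc * (ga * gc * gb⁻¹ * ga⁻¹) *
        (gc⁻¹ * ga * gb * gc⁻¹ * ga⁻¹ * gb⁻¹) := by group
    _ = ga * gc * gb⁻¹ * ga⁻¹ * (gb * gb) *
        (gc⁻¹ * ga * gb * gc⁻¹ * ga⁻¹ * gb⁻¹) := by rw [key1]
    _ = ga * gc * gb⁻¹ * ga⁻¹ *
        (gb * gb * (gc⁻¹ * ga * gb * gc⁻¹ * ga⁻¹ * gb⁻¹)) := by group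
    _ = ga * gc * gb⁻¹ * ga⁻¹ *
        (gb * gc⁻¹ * ga * gb * gc⁻¹ * ga⁻¹ * gc * gb⁻¹) := by rw [key2]
    _ = ((gb * gc⁻¹)⁻¹ * ga * (gb * gc⁻¹) * ga⁻¹)⁻¹ * (gb * gc⁻¹) *
        ((gb * gc⁻¹)⁻¹ * ga * (gb * gc⁻¹) * ga⁻¹) * (gb * gc⁻¹)⁻¹ := by group
end
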